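/- If (A, B, T, Z) is a Hopf-Galois system over a commutative ring k, then T is an (A,B)-bi-Galois extension of k: the Galois maps T ⊗ T → A ⊗ T, x ⊗ y ↦ α_T(x)(1 ⊗ y), and T ⊗ T → T ⊗ B, x ⊗ y ↦ (x ⊗ 1)β_T(y), are bijective. -/
import Mathlib


open TensorProduct

/-- Bialgebra structure given as explicit data: a comultiplication and counit which are
algebra morphisms, coassociative and counital. -/
structure BialgData (k : Type*) [CommRing k] (A : Type*) [Ring A] [Algebra k A] where
  comul : A →ₐ[k] A ⊗[k] A
  counit : A →ₐ[k] k
  coassoc : (TensorProduct.assoc k A A A).toLinearMap ∘ₗ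
      (TensorProduct.map comul.toLinearMap LinearMap.id) ∘ₗ comul.toLinearMap
      = (TensorProduct.map LinearMap.id comul.toLinearMap) ∘ₗ comul.toLinearMap
  counit_left : (TensorProduct.lid k A).toLinearMap ∘ₗ
      (TensorProduct.map counit.toLinearMap LinearMap.id) ∘ₗ comul.toLinearMap = LinearMap.id
  counit_right : (TensorProduct.rid k A).toLinearMap ∘ₗ
      (TensorProduct.map LinearMap.id counit.toLinearMap) ∘ₗ comul.toLinearMap = LinearMap.id

/-- A Hopf-Galois system in the sense of Bichon: bialgebras `A`, `B`, an `(A,B)`-bicomodule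
algebra `T`, algebra morphisms `γ : A → T ⊗ Z`, `δ : B → Z ⊗ T` compatible with the coactions
and comultiplications, and a generalized antipode `S_Z : Z → T`. -/
structure HopfGaloisSystem (k : Type*) [CommRing k] (A B T Z : Type*)
    [Ring A] [Algebra k A] [Ring B] [Algebra k B]
    [Ring T] [Algebra k T] [Ring Z] [Algebra k Z] where
  bialgA : BialgData k A
  bialgB : BialgData k B
  /-- the left coaction of `A` on `T` -/
  αT : T →ₐ[k] A ⊗[k] T
  /-- the right coaction of `B` on `T` -/
  βT : T →ₐ[k] T ⊗[k] B
  αT_coassoc : (TensorProduct.map bialgA.comul.toLinearMap LinearMap.id) ∘ₗ αT.toLinearMap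
      = (TensorProduct.assoc k A A T).symm.toLinearMap ∘ₗ
        (TensorProduct.map LinearMap.id αT.toLinearMap) ∘ₗ αT.toLinearMap
  αT_counit : (TensorProduct.lid k T).toLinearMap ∘ₗ
      (TensorProduct.map bialgA.counit.toLinearMap LinearMap.id) ∘ₗ αT.toLinearMap = LinearMap.id
  βT_coassoc : (TensorProduct.map LinearMap.id bialgB.comul.toLinearMap) ∘ₗ βT.toLinearMap
      = (TensorProduct.assoc k T B B).toLinearMap ∘ₗ
        (TensorProduct.map βT.toLinearMap LinearMap.id) ∘ₗ βT.toLinearMap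
  βT_counit : (TensorProduct.rid k T).toLinearMap ∘ₗ
      (TensorProduct.map LinearMap.id bialgB.counit.toLinearMap) ∘ₗ βT.toLinearMap = LinearMap.id
  bicomod : (TensorProduct.map LinearMap.id βT.toLinearMap) ∘ₗ αT.toLinearMap
      = (TensorProduct.assoc k A T B).toLinearMap ∘ₗ
        (TensorProduct.map αT.toLinearMap LinearMap.id) ∘ₗ βT.toLinearMap
  γ : A →ₐ[k] T ⊗[k] Z
  δ : B →ₐ[k] Z ⊗[k] T
  diag1 : (TensorProduct.assoc k T Z T).toLinearMap ∘ₗ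
      (TensorProduct.map γ.toLinearMap LinearMap.id) ∘ₗ αT.toLinearMap
      = (TensorProduct.map LinearMap.id δ.toLinearMap) ∘ₗ βT.toLinearMap
  diag2 : (TensorProduct.map LinearMap.id γ.toLinearMap) ∘ₗ bialgA.comul.toLinearMap
      = (TensorProduct.assoc k A T Z).toLinearMap ∘ₗ
        (TensorProduct.map αT.toLinearMap LinearMap.id) ∘ₗ γ.toLinearMap
  diag3 : (TensorProduct.map δ.toLinearMap LinearMap.id) ∘ₗ bialgB.comul.toLinearMap
      = (TensorProduct.assoc k Z T B).symm.toLinearMap ∘ₗ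
        (TensorProduct.map LinearMap.id βT.toLinearMap) ∘ₗ δ.toLinearMap
  /-- the generalized antipode -/
  SZ : Z →ₗ[k] T
  antipode1 : (LinearMap.mul' k T) ∘ₗ (TensorProduct.map LinearMap.id SZ) ∘ₗ γ.toLinearMap
      = (Algebra.linearMap k T) ∘ₗ bialgA.counit.toLinearMap
  antipode2 : (LinearMap.mul' k T) ∘ₗ (TensorProduct.map SZ LinearMap.id) ∘ₗ δ.toLinearMap
      = (Algebra.linearMap k T) ∘ₗ bialgB.counit.toLinearMap


section Aux

variable {k : Type*} [CommRing k] {A B T Z : Type*}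
  [Ring A] [Algebra k A] [Ring B] [Algebra k B]
  [Ring T] [Algebra k T] [Ring Z] [Algebra k Z]

/-- Multiplying `w : A ⊗ T` by `1 ⊗ y` on the right = applying `id ⊗ mulRight y`. -/
lemma hgs_mul_one_tmul (w : A ⊗[k] T) (y : T) :
    w * ((1 : A) ⊗ₜ[k] y)
      = TensorProduct.map LinearMap.id (LinearMap.mulRight k y) w := by
  induction w with
  | zero => simp
  | tmul a t => simp [Algebra.TensorProduct.tmul_mul_tmul]
  | add u v hu hv => rw [add_mul, map_add, hu, hv]

/-- Multiplying `w : T ⊗ B` by `x ⊗ 1` on the left = applying `mulLeft x ⊗ id`. -/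
lemma hgs_tmul_one_mul (x : T) (w : T ⊗[k] B) :
    (x ⊗ₜ[k] (1 : B)) * w
      = TensorProduct.map (LinearMap.mulLeft k x) LinearMap.id w := by
  induction w with
  | zero => simp
  | tmul t b => simp [Algebra.TensorProduct.tmul_mul_tmul]
  | add u v hu hv => rw [mul_add, map_add, hu, hv]

lemma hgs_assoc_mul {X : Type*} [AddCommGroup X] [Module k X] (w : X ⊗[k] T) (y : T) :
    TensorProduct.map LinearMap.id (LinearMap.mul' k T)
        ((TensorProduct.assoc k X T T) (w ⊗ₜ[k] y))
      = TensorProduct.map LinearMap.id (LinearMap.mulRight k y) w := by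
  induction w with
  | zero => simp
  | tmul x t => simp [TensorProduct.assoc_tmul, LinearMap.mul'_apply]
  | add u v hu hv => rw [add_tmul, map_add, map_add, hu, hv, map_add]

lemma hgs_assoc_symm_mul {X : Type*} [AddCommGroup X] [Module k X] (x : T) (w : T ⊗[k] X) :
    TensorProduct.map (LinearMap.mul' k T) LinearMap.id
        ((TensorProduct.assoc k T T X).symm (x ⊗ₜ[k] w))
      = TensorProduct.map (LinearMap.mulLeft k x) LinearMap.id w := by
  induction w with
  | zero => simp
  | tmul t b => simp [TensorProduct.assoc_symm_tmul, LinearMap.mul'_apply]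
  | add u v hu hv => rw [tmul_add, map_add, map_add, hu, hv, map_add]

lemma hgs_map_id_comp {X Y₁ Y₂ Y₃ : Type*} [AddCommGroup X] [Module k X]
    [AddCommGroup Y₁] [Module k Y₁] [AddCommGroup Y₂] [Module k Y₂]
    [AddCommGroup Y₃] [Module k Y₃] (f : Y₂ →ₗ[k] Y₃) (g : Y₁ →ₗ[k] Y₂) (w : X ⊗[k] Y₁) :
    TensorProduct.map LinearMap.id (f ∘ₗ g) w
      = TensorProduct.map LinearMap.id f (TensorProduct.map LinearMap.id g w) := by
  rw [← LinearMap.comp_apply, ← TensorProduct.map_comp, LinearMap.id_comp]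

lemma hgs_map_comp_id {X Y₁ Y₂ Y₃ : Type*} [AddCommGroup X] [Module k X]
    [AddCommGroup Y₁] [Module k Y₁] [AddCommGroup Y₂] [Module k Y₂]
    [AddCommGroup Y₃] [Module k Y₃] (f : Y₂ →ₗ[k] Y₃) (g : Y₁ →ₗ[k] Y₂) (w : Y₁ ⊗[k] X) :
    TensorProduct.map (f ∘ₗ g) LinearMap.id w
      = TensorProduct.map f LinearMap.id (TensorProduct.map g LinearMap.id w) := by
  rw [← LinearMap.comp_apply, ← TensorProduct.map_comp, LinearMap.id_comp]

end Aux

section Key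

variable {k : Type*} [CommRing k] {A B T Z : Type*}
  [Ring A] [Algebra k A] [Ring B] [Algebra k B]
  [Ring T] [Algebra k T] [Ring Z] [Algebra k Z]
  (hgs : HopfGaloisSystem k A B T Z)

/-- `F = (id ⊗ S) ∘ γ : A → T ⊗ T`. -/
noncomputable def hgsF : A →ₗ[k] T ⊗[k] T :=
  (TensorProduct.map LinearMap.id hgs.SZ) ∘ₗ hgs.γ.toLinearMap

/-- `F' = (S ⊗ id) ∘ δ : B → T ⊗ T`. -/
noncomputable def hgsF' : B →ₗ[k] T ⊗[k] T :=
  (TensorProduct.map hgs.SZ LinearMap.id) ∘ₗ hgs.δ.toLinearMap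

/-- The inverse of the left Galois map. -/
noncomputable def hgsNuL : A ⊗[k] T →ₗ[k] T ⊗[k] T :=
  (TensorProduct.map LinearMap.id (LinearMap.mul' k T)) ∘ₗ
    (TensorProduct.assoc k T T T).toLinearMap ∘ₗ
    (TensorProduct.map (hgsF hgs) LinearMap.id)

/-- The inverse of the right Galois map. -/
noncomputable def hgsNuR : T ⊗[k] B →ₗ[k] T ⊗[k] T :=
  (TensorProduct.map (LinearMap.mul' k T) LinearMap.id) ∘ₗ
    (TensorProduct.assoc k T T T).symm.toLinearMap ∘ₗ
    (TensorProduct.map LinearMap.id (hgsF' hgs))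

lemma hgsNuL_tmul (a : A) (t : T) :
    hgsNuL hgs (a ⊗ₜ[k] t)
      = TensorProduct.map LinearMap.id (LinearMap.mulRight k t) (hgsF hgs a) := by
  simp only [hgsNuL, LinearMap.comp_apply, TensorProduct.map_tmul, LinearMap.id_coe, id_eq,
    LinearEquiv.coe_coe]
  exact hgs_assoc_mul _ _

lemma hgsNuR_tmul (t : T) (b : B) :
    hgsNuR hgs (t ⊗ₜ[k] b)
      = TensorProduct.map (LinearMap.mulLeft k t) LinearMap.id (hgsF' hgs b) := by
  simp only [hgsNuR, LinearMap.comp_apply, TensorProduct.map_tmul, LinearMap.id_coe, id_eq,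
    LinearEquiv.coe_coe]
  exact hgs_assoc_symm_mul _ _

/-- Key identity: `νₗ ∘ α = (· ⊗ 1)`. -/
lemma hgsNuL_alpha (x : T) : hgsNuL hgs (hgs.αT x) = x ⊗ₜ[k] (1 : T) := by
  have hβ : TensorProduct.map LinearMap.id hgs.bialgB.counit.toLinearMap (hgs.βT x)
      = (TensorProduct.rid k T).symm x := by
    have h := LinearMap.congr_fun hgs.βT_counit x
    simp only [LinearMap.comp_apply, LinearEquiv.coe_coe, LinearMap.id_coe, id_eq,
      AlgHom.toLinearMap_apply] at h
    exact (LinearEquiv.eq_symm_apply _).2 h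
  have hd1 := LinearMap.congr_fun hgs.diag1 x
  simp only [LinearMap.comp_apply, LinearEquiv.coe_coe, AlgHom.toLinearMap_apply] at hd1
  have step1 : TensorProduct.map (hgsF hgs) LinearMap.id (hgs.αT x)
      = TensorProduct.map (TensorProduct.map LinearMap.id hgs.SZ) LinearMap.id
          (TensorProduct.map hgs.γ.toLinearMap LinearMap.id (hgs.αT x)) := by
    rw [← hgs_map_comp_id]; rfl
  calc hgsNuL hgs (hgs.αT x)
      = TensorProduct.map LinearMap.id (LinearMap.mul' k T)
          ((TensorProduct.assoc k T T T)
            (TensorProduct.map (TensorProduct.map LinearMap.id hgs.SZ) LinearMap.id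
              (TensorProduct.map hgs.γ.toLinearMap LinearMap.id (hgs.αT x)))) := by
        rw [hgsNuL]; simp only [LinearMap.comp_apply, LinearEquiv.coe_coe]; rw [step1]
    _ = TensorProduct.map LinearMap.id (LinearMap.mul' k T)
          (TensorProduct.map LinearMap.id (TensorProduct.map hgs.SZ LinearMap.id)
            ((TensorProduct.assoc k T Z T)
              (TensorProduct.map hgs.γ.toLinearMap LinearMap.id (hgs.αT x)))) := by
        rw [TensorProduct.map_map_assoc]
    _ = TensorProduct.map LinearMap.id
          ((LinearMap.mul' k T) ∘ₗ (TensorProduct.map hgs.SZ LinearMap.id) ∘ₗ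
            hgs.δ.toLinearMap) (hgs.βT x) := by
        rw [hd1, hgs_map_id_comp, hgs_map_id_comp]
    _ = TensorProduct.map LinearMap.id
          ((Algebra.linearMap k T) ∘ₗ hgs.bialgB.counit.toLinearMap) (hgs.βT x) := by
        rw [hgs.antipode2]
    _ = TensorProduct.map LinearMap.id (Algebra.linearMap k T)
          ((TensorProduct.rid k T).symm x) := by
        rw [hgs_map_id_comp, hβ]
    _ = x ⊗ₜ[k] (1 : T) := by
        rw [TensorProduct.rid_symm_apply]
        simp [Algebra.linearMap_apply]

/-- Key identity: `νᵣ ∘ β = (1 ⊗ ·)`. -/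
lemma hgsNuR_beta (x : T) : hgsNuR hgs (hgs.βT x) = (1 : T) ⊗ₜ[k] x := by
  have hα : TensorProduct.map hgs.bialgA.counit.toLinearMap LinearMap.id (hgs.αT x)
      = (TensorProduct.lid k T).symm x := by
    have h := LinearMap.congr_fun hgs.αT_counit x
    simp only [LinearMap.comp_apply, LinearEquiv.coe_coe, LinearMap.id_coe, id_eq,
      AlgHom.toLinearMap_apply] at h
    exact (LinearEquiv.eq_symm_apply _).2 h
  have hd1 := LinearMap.congr_fun hgs.diag1 x
  simp only [LinearMap.comp_apply, LinearEquiv.coe_coe, AlgHom.toLinearMap_apply] at hd1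
  have hd1' : (TensorProduct.assoc k T Z T).symm
      (TensorProduct.map LinearMap.id hgs.δ.toLinearMap (hgs.βT x))
      = TensorProduct.map hgs.γ.toLinearMap LinearMap.id (hgs.αT x) := by
    rw [← hd1, LinearEquiv.symm_apply_apply]
  have step1 : TensorProduct.map LinearMap.id (hgsF' hgs) (hgs.βT x)
      = TensorProduct.map LinearMap.id (TensorProduct.map hgs.SZ LinearMap.id)
          (TensorProduct.map LinearMap.id hgs.δ.toLinearMap (hgs.βT x)) := by
    rw [← hgs_map_id_comp]; rfl
  calc hgsNuR hgs (hgs.βT x)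
      = TensorProduct.map (LinearMap.mul' k T) LinearMap.id
          ((TensorProduct.assoc k T T T).symm
            (TensorProduct.map LinearMap.id (TensorProduct.map hgs.SZ LinearMap.id)
              (TensorProduct.map LinearMap.id hgs.δ.toLinearMap (hgs.βT x)))) := by
        rw [hgsNuR]; simp only [LinearMap.comp_apply, LinearEquiv.coe_coe]; rw [step1]
    _ = TensorProduct.map (LinearMap.mul' k T) LinearMap.id
          (TensorProduct.map (TensorProduct.map LinearMap.id hgs.SZ) LinearMap.id
            ((TensorProduct.assoc k T Z T).symm
              (TensorProduct.map LinearMap.id hgs.δ.toLinearMap (hgs.βT x)))) := by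
        rw [TensorProduct.map_map_assoc_symm]
    _ = TensorProduct.map
          ((LinearMap.mul' k T) ∘ₗ (TensorProduct.map LinearMap.id hgs.SZ) ∘ₗ
            hgs.γ.toLinearMap) LinearMap.id (hgs.αT x) := by
        rw [hd1', hgs_map_comp_id, hgs_map_comp_id]
    _ = TensorProduct.map
          ((Algebra.linearMap k T) ∘ₗ hgs.bialgA.counit.toLinearMap) LinearMap.id
          (hgs.αT x) := by
        rw [hgs.antipode1]
    _ = TensorProduct.map (Algebra.linearMap k T) LinearMap.id
          ((TensorProduct.lid k T).symm x) := by
        rw [hgs_map_comp_id, hα]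
    _ = (1 : T) ⊗ₜ[k] x := by
        rw [TensorProduct.lid_symm_apply]
        simp [Algebra.linearMap_apply]

end Key

section Key2

variable {k : Type*} [CommRing k] {A B T Z : Type*}
  [Ring A] [Algebra k A] [Ring B] [Algebra k B]
  [Ring T] [Algebra k T] [Ring Z] [Algebra k Z]
  (hgs : HopfGaloisSystem k A B T Z)

/-- The left Galois map (as in the statement). -/
noncomputable def hgsKapL : T ⊗[k] T →ₗ[k] A ⊗[k] T :=
  (LinearMap.mul' k (A ⊗[k] T)) ∘ₗ
    (TensorProduct.map hgs.αT.toLinearMap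
      (Algebra.TensorProduct.includeRight (R := k) (A := A) (B := T)).toLinearMap)

/-- The right Galois map (as in the statement). -/
noncomputable def hgsKapR : T ⊗[k] T →ₗ[k] T ⊗[k] B :=
  (LinearMap.mul' k (T ⊗[k] B)) ∘ₗ
    (TensorProduct.map
      (Algebra.TensorProduct.includeLeft (R := k) (S := k) (A := T) (B := B)).toLinearMap
      hgs.βT.toLinearMap)

lemma hgsKapL_tmul (x y : T) :
    hgsKapL hgs (x ⊗ₜ[k] y)
      = TensorProduct.map LinearMap.id (LinearMap.mulRight k y) (hgs.αT x) := by
  simp only [hgsKapL, LinearMap.comp_apply, TensorProduct.map_tmul,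
    AlgHom.toLinearMap_apply, Algebra.TensorProduct.includeRight_apply, LinearMap.mul'_apply]
  exact hgs_mul_one_tmul _ _

lemma hgsKapR_tmul (x y : T) :
    hgsKapR hgs (x ⊗ₜ[k] y)
      = TensorProduct.map (LinearMap.mulLeft k x) LinearMap.id (hgs.βT y) := by
  simp only [hgsKapR, LinearMap.comp_apply, TensorProduct.map_tmul,
    AlgHom.toLinearMap_apply, Algebra.TensorProduct.includeLeft_apply, LinearMap.mul'_apply]
  exact hgs_tmul_one_mul _ _

lemma hgsKapL_apply (w : T ⊗[k] T) :
    hgsKapL hgs w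
      = TensorProduct.map LinearMap.id (LinearMap.mul' k T)
          ((TensorProduct.assoc k A T T)
            (TensorProduct.map hgs.αT.toLinearMap LinearMap.id w)) := by
  induction w with
  | zero => simp only [LinearMap.map_zero, LinearEquiv.map_zero]
  | tmul x y =>
      rw [hgsKapL_tmul]
      simp only [TensorProduct.map_tmul, LinearMap.id_coe, id_eq, AlgHom.toLinearMap_apply]
      exact (hgs_assoc_mul _ _).symm
  | add u v hu hv => rw [map_add, hu, hv, map_add, map_add, map_add]

lemma hgsKapR_apply (w : T ⊗[k] T) :
    hgsKapR hgs w
      = TensorProduct.map (LinearMap.mul' k T) LinearMap.id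
          ((TensorProduct.assoc k T T B).symm
            (TensorProduct.map LinearMap.id hgs.βT.toLinearMap w)) := by
  induction w with
  | zero => simp only [LinearMap.map_zero, LinearEquiv.map_zero]
  | tmul x y =>
      rw [hgsKapR_tmul]
      simp only [TensorProduct.map_tmul, LinearMap.id_coe, id_eq, AlgHom.toLinearMap_apply]
      exact (hgs_assoc_symm_mul _ _).symm
  | add u v hu hv => rw [map_add, hu, hv, map_add, map_add, map_add]

/-- Key identity: `κₗ ∘ F = (· ⊗ 1)`. -/
lemma hgsKapL_F (a : A) : hgsKapL hgs (hgsF hgs a) = a ⊗ₜ[k] (1 : T) := by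
  have hΔ : TensorProduct.map LinearMap.id hgs.bialgA.counit.toLinearMap
        (hgs.bialgA.comul a) = (TensorProduct.rid k A).symm a := by
    have h := LinearMap.congr_fun hgs.bialgA.counit_right a
    simp only [LinearMap.comp_apply, LinearEquiv.coe_coe, LinearMap.id_coe, id_eq,
      AlgHom.toLinearMap_apply] at h
    exact (LinearEquiv.eq_symm_apply _).2 h
  have hd2 := LinearMap.congr_fun hgs.diag2 a
  simp only [LinearMap.comp_apply, LinearEquiv.coe_coe, AlgHom.toLinearMap_apply] at hd2
  have e1 : TensorProduct.map hgs.αT.toLinearMap (LinearMap.id : T →ₗ[k] T)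
        (TensorProduct.map LinearMap.id hgs.SZ (hgs.γ a))
      = TensorProduct.map (LinearMap.id : A ⊗[k] T →ₗ[k] A ⊗[k] T) hgs.SZ
        (TensorProduct.map hgs.αT.toLinearMap LinearMap.id (hgs.γ a)) := by
    rw [← LinearMap.comp_apply, ← LinearMap.comp_apply, ← TensorProduct.map_comp,
      ← TensorProduct.map_comp]
    simp only [LinearMap.id_comp, LinearMap.comp_id]
  have e2 : (TensorProduct.assoc k A T T)
        (TensorProduct.map (LinearMap.id : A ⊗[k] T →ₗ[k] A ⊗[k] T) hgs.SZ
          (TensorProduct.map hgs.αT.toLinearMap LinearMap.id (hgs.γ a)))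
      = TensorProduct.map LinearMap.id (TensorProduct.map LinearMap.id hgs.SZ)
          ((TensorProduct.assoc k A T Z)
            (TensorProduct.map hgs.αT.toLinearMap LinearMap.id (hgs.γ a))) := by
    have := TensorProduct.map_map_assoc (R := k) (LinearMap.id : A →ₗ[k] A)
      (LinearMap.id : T →ₗ[k] T) hgs.SZ
      (TensorProduct.map hgs.αT.toLinearMap LinearMap.id (hgs.γ a))
    rw [TensorProduct.map_id] at this
    exact this.symm
  have hF : hgsF hgs a = TensorProduct.map LinearMap.id hgs.SZ (hgs.γ a) := rfl
  calc hgsKapL hgs (hgsF hgs a)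
      = TensorProduct.map LinearMap.id (LinearMap.mul' k T)
          (TensorProduct.map LinearMap.id (TensorProduct.map LinearMap.id hgs.SZ)
            (TensorProduct.map LinearMap.id hgs.γ.toLinearMap (hgs.bialgA.comul a))) := by
        rw [hgsKapL_apply, hF, e1, e2, hd2]
    _ = TensorProduct.map LinearMap.id
          ((LinearMap.mul' k T) ∘ₗ (TensorProduct.map LinearMap.id hgs.SZ) ∘ₗ
            hgs.γ.toLinearMap) (hgs.bialgA.comul a) := by
        rw [hgs_map_id_comp, hgs_map_id_comp]
    _ = TensorProduct.map LinearMap.id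
          ((Algebra.linearMap k T) ∘ₗ hgs.bialgA.counit.toLinearMap)
          (hgs.bialgA.comul a) := by rw [hgs.antipode1]
    _ = TensorProduct.map LinearMap.id (Algebra.linearMap k T)
          ((TensorProduct.rid k A).symm a) := by rw [hgs_map_id_comp, hΔ]
    _ = a ⊗ₜ[k] (1 : T) := by
        rw [TensorProduct.rid_symm_apply]
        simp [Algebra.linearMap_apply]

/-- Key identity: `κᵣ ∘ F' = (1 ⊗ ·)`. -/
lemma hgsKapR_F' (b : B) : hgsKapR hgs (hgsF' hgs b) = (1 : T) ⊗ₜ[k] b := by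
  have hΔ : TensorProduct.map hgs.bialgB.counit.toLinearMap LinearMap.id
        (hgs.bialgB.comul b) = (TensorProduct.lid k B).symm b := by
    have h := LinearMap.congr_fun hgs.bialgB.counit_left b
    simp only [LinearMap.comp_apply, LinearEquiv.coe_coe, LinearMap.id_coe, id_eq,
      AlgHom.toLinearMap_apply] at h
    exact (LinearEquiv.eq_symm_apply _).2 h
  have hd3 := LinearMap.congr_fun hgs.diag3 b
  simp only [LinearMap.comp_apply, LinearEquiv.coe_coe, AlgHom.toLinearMap_apply] at hd3
  have e1 : TensorProduct.map (LinearMap.id : T →ₗ[k] T) hgs.βT.toLinearMap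
        (TensorProduct.map hgs.SZ LinearMap.id (hgs.δ b))
      = TensorProduct.map hgs.SZ (LinearMap.id : T ⊗[k] B →ₗ[k] T ⊗[k] B)
        (TensorProduct.map LinearMap.id hgs.βT.toLinearMap (hgs.δ b)) := by
    rw [← LinearMap.comp_apply, ← LinearMap.comp_apply, ← TensorProduct.map_comp,
      ← TensorProduct.map_comp]
    simp only [LinearMap.id_comp, LinearMap.comp_id]
  have e2 : (TensorProduct.assoc k T T B).symm
        (TensorProduct.map hgs.SZ (LinearMap.id : T ⊗[k] B →ₗ[k] T ⊗[k] B)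
          (TensorProduct.map LinearMap.id hgs.βT.toLinearMap (hgs.δ b)))
      = TensorProduct.map (TensorProduct.map hgs.SZ LinearMap.id) LinearMap.id
          ((TensorProduct.assoc k Z T B).symm
            (TensorProduct.map LinearMap.id hgs.βT.toLinearMap (hgs.δ b))) := by
    have := TensorProduct.map_map_assoc_symm (R := k) hgs.SZ
      (LinearMap.id : T →ₗ[k] T) (LinearMap.id : B →ₗ[k] B)
      (TensorProduct.map LinearMap.id hgs.βT.toLinearMap (hgs.δ b))
    rw [TensorProduct.map_id] at this
    exact this.symm
  have hF : hgsF' hgs b = TensorProduct.map hgs.SZ LinearMap.id (hgs.δ b) := rfl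
  calc hgsKapR hgs (hgsF' hgs b)
      = TensorProduct.map (LinearMap.mul' k T) LinearMap.id
          (TensorProduct.map (TensorProduct.map hgs.SZ LinearMap.id) LinearMap.id
            (TensorProduct.map hgs.δ.toLinearMap LinearMap.id (hgs.bialgB.comul b))) := by
        rw [hgsKapR_apply, hF, e1, e2, hd3]
    _ = TensorProduct.map
          ((LinearMap.mul' k T) ∘ₗ (TensorProduct.map hgs.SZ LinearMap.id) ∘ₗ
            hgs.δ.toLinearMap) LinearMap.id (hgs.bialgB.comul b) := by
        rw [hgs_map_comp_id, hgs_map_comp_id]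
    _ = TensorProduct.map
          ((Algebra.linearMap k T) ∘ₗ hgs.bialgB.counit.toLinearMap) LinearMap.id
          (hgs.bialgB.comul b) := by rw [hgs.antipode2]
    _ = TensorProduct.map (Algebra.linearMap k T) LinearMap.id
          ((TensorProduct.lid k B).symm b) := by rw [hgs_map_comp_id, hΔ]
    _ = (1 : T) ⊗ₜ[k] b := by
        rw [TensorProduct.lid_symm_apply]
        simp [Algebra.linearMap_apply]

end Key2

section Final

variable {k : Type*} [CommRing k] {A B T Z : Type*}
  [Ring A] [Algebra k A] [Ring B] [Algebra k B]
  [Ring T] [Algebra k T] [Ring Z] [Algebra k Z]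
  (hgs : HopfGaloisSystem k A B T Z)

lemma hgsNuL_mulRight (y : T) (w : A ⊗[k] T) :
    hgsNuL hgs (TensorProduct.map LinearMap.id (LinearMap.mulRight k y) w)
      = TensorProduct.map LinearMap.id (LinearMap.mulRight k y) (hgsNuL hgs w) := by
  induction w with
  | zero => simp only [LinearMap.map_zero]
  | tmul a t =>
      simp only [TensorProduct.map_tmul, LinearMap.id_coe, id_eq, LinearMap.mulRight_apply]
      rw [hgsNuL_tmul, hgsNuL_tmul, ← hgs_map_id_comp, ← LinearMap.mulRight_mul]
  | add u v hu hv => rw [map_add, map_add, hu, hv, map_add, map_add]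

lemma hgsKapL_mulRight (y : T) (w : T ⊗[k] T) :
    hgsKapL hgs (TensorProduct.map LinearMap.id (LinearMap.mulRight k y) w)
      = TensorProduct.map LinearMap.id (LinearMap.mulRight k y) (hgsKapL hgs w) := by
  induction w with
  | zero => simp only [LinearMap.map_zero]
  | tmul x t =>
      simp only [TensorProduct.map_tmul, LinearMap.id_coe, id_eq, LinearMap.mulRight_apply]
      rw [hgsKapL_tmul, hgsKapL_tmul, ← hgs_map_id_comp, ← LinearMap.mulRight_mul]
  | add u v hu hv => rw [map_add, map_add, hu, hv, map_add, map_add]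

lemma hgsNuR_mulLeft (x : T) (w : T ⊗[k] B) :
    hgsNuR hgs (TensorProduct.map (LinearMap.mulLeft k x) LinearMap.id w)
      = TensorProduct.map (LinearMap.mulLeft k x) LinearMap.id (hgsNuR hgs w) := by
  induction w with
  | zero => simp only [LinearMap.map_zero]
  | tmul t b =>
      simp only [TensorProduct.map_tmul, LinearMap.id_coe, id_eq, LinearMap.mulLeft_apply]
      rw [hgsNuR_tmul, hgsNuR_tmul, ← hgs_map_comp_id, ← LinearMap.mulLeft_mul]
  | add u v hu hv => rw [map_add, map_add, hu, hv, map_add, map_add]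

lemma hgsKapR_mulLeft (x : T) (w : T ⊗[k] T) :
    hgsKapR hgs (TensorProduct.map (LinearMap.mulLeft k x) LinearMap.id w)
      = TensorProduct.map (LinearMap.mulLeft k x) LinearMap.id (hgsKapR hgs w) := by
  induction w with
  | zero => simp only [LinearMap.map_zero]
  | tmul t y =>
      simp only [TensorProduct.map_tmul, LinearMap.id_coe, id_eq, LinearMap.mulLeft_apply]
      rw [hgsKapR_tmul, hgsKapR_tmul, ← hgs_map_comp_id, ← LinearMap.mulLeft_mul]
  | add u v hu hv => rw [map_add, map_add, hu, hv, map_add, map_add]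

lemma hgsL_left_inv : (hgsNuL hgs) ∘ₗ (hgsKapL hgs) = LinearMap.id := by
  apply TensorProduct.ext'
  intro x y
  simp only [LinearMap.comp_apply, LinearMap.id_coe, id_eq]
  rw [hgsKapL_tmul, hgsNuL_mulRight, hgsNuL_alpha]
  simp only [TensorProduct.map_tmul, LinearMap.id_coe, id_eq, LinearMap.mulRight_apply, one_mul]

lemma hgsL_right_inv : (hgsKapL hgs) ∘ₗ (hgsNuL hgs) = LinearMap.id := by
  apply TensorProduct.ext'
  intro a t
  simp only [LinearMap.comp_apply, LinearMap.id_coe, id_eq]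
  rw [hgsNuL_tmul, hgsKapL_mulRight, hgsKapL_F]
  simp only [TensorProduct.map_tmul, LinearMap.id_coe, id_eq, LinearMap.mulRight_apply, one_mul]

lemma hgsR_left_inv : (hgsNuR hgs) ∘ₗ (hgsKapR hgs) = LinearMap.id := by
  apply TensorProduct.ext'
  intro x y
  simp only [LinearMap.comp_apply, LinearMap.id_coe, id_eq]
  rw [hgsKapR_tmul, hgsNuR_mulLeft, hgsNuR_beta]
  simp only [TensorProduct.map_tmul, LinearMap.id_coe, id_eq, LinearMap.mulLeft_apply, mul_one]

lemma hgsR_right_inv : (hgsKapR hgs) ∘ₗ (hgsNuR hgs) = LinearMap.id := by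
  apply TensorProduct.ext'
  intro t b
  simp only [LinearMap.comp_apply, LinearMap.id_coe, id_eq]
  rw [hgsNuR_tmul, hgsKapR_mulLeft, hgsKapR_F']
  simp only [TensorProduct.map_tmul, LinearMap.id_coe, id_eq, LinearMap.mulLeft_apply, mul_one]

end Final

/-- If `(A, B, T, Z)` is a Hopf-Galois system over a commutative ring `k`, then `T` is an
`(A,B)`-bi-Galois extension of `k`: both Galois maps `T ⊗ T → A ⊗ T`, `x ⊗ y ↦ α_T(x)(1 ⊗ y)`,
and `T ⊗ T → T ⊗ B`, `x ⊗ y ↦ (x ⊗ 1)β_T(y)`, are bijective. -/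
theorem hopfGaloisSystem_biGalois
    (k : Type*) [CommRing k] (A B T Z : Type*)
    [Ring A] [Algebra k A] [Ring B] [Algebra k B]
    [Ring T] [Algebra k T] [Ring Z] [Algebra k Z]
    [Nontrivial A] [Nontrivial B] [Nontrivial T] [Nontrivial Z]
    (hgs : HopfGaloisSystem k A B T Z) :
    Function.Bijective
      ((LinearMap.mul' k (A ⊗[k] T)) ∘ₗ
        (TensorProduct.map hgs.αT.toLinearMap
          (Algebra.TensorProduct.includeRight (R := k) (A := A) (B := T)).toLinearMap)
        : T ⊗[k] T →ₗ[k] A ⊗[k] T) ∧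
    Function.Bijective
      ((LinearMap.mul' k (T ⊗[k] B)) ∘ₗ
        (TensorProduct.map
          (Algebra.TensorProduct.includeLeft (R := k) (S := k) (A := T) (B := B)).toLinearMap
          hgs.βT.toLinearMap)
        : T ⊗[k] T →ₗ[k] T ⊗[k] B) := by
  constructor
  · show Function.Bijective (hgsKapL hgs)
    exact Function.bijective_iff_has_inverse.2
      ⟨hgsNuL hgs, fun w => LinearMap.congr_fun (hgsL_left_inv hgs) w,
        fun v => LinearMap.congr_fun (hgsL_right_inv hgs) v⟩
  · show Function.Bijective (hgsKapR hgs)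
    exact Function.bijective_iff_has_inverse.2
      ⟨hgsNuR hgs, fun w => LinearMap.congr_fun (hgsR_left_inv hgs) w,
        fun v => LinearMap.congr_fun (hgsR_right_inv hgs) v⟩
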